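/- Sliding a tie endpoint up across a positive crossing (relation (i) of the generalized-tie relations): for every n ≥ 2 and all indices 1 ≤ i and i+1 < j ≤ n, the equality σ_i η_{i,j} = η_{i+1,j} σ_i holds in the tied braid monoid TM_n. -/

import Mathlib

/-!
The tied braid monoid `TM n` (n ≥ 2), presented by generators
σ_1,…,σ_{n−1}, σ_1⁻¹,…,σ_{n−1}⁻¹, η_1,…,η_{n−1} subject to the relations:
σ_i σ_i⁻¹ = σ_i⁻¹ σ_i = 1; σ_i σ_{i+1} σ_i = σ_{i+1} σ_i σ_{i+1};
σ_i σ_j = σ_j σ_i for |i−j| ≥ 2; η_i η_j = η_j η_i for all i, j;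
η_i σ_i = σ_i η_i; η_i σ_j = σ_j η_i for |i−j| ≥ 2;
η_i σ_j σ_i^ε = σ_j σ_i^ε η_j for |i−j| = 1, ε = ±1;
η_i η_j σ_i = η_j σ_i η_j = σ_i η_i η_j for |i−j| = 1; η_i² = η_i.
-/

/-- Generators of the tied braid monoid: σ_i, σ_i⁻¹ and η_i for 1 ≤ i ≤ n−1. -/
inductive TMGen (n : ℕ) : Type
  | sig (i : ℕ) (h : 1 ≤ i ∧ i ≤ n - 1) : TMGen n
  | sigInv (i : ℕ) (h : 1 ≤ i ∧ i ≤ n - 1) : TMGen n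
  | eta (i : ℕ) (h : 1 ≤ i ∧ i ≤ n - 1) : TMGen n

/-- The word σ_i in the free monoid on the generators. -/
def wS (n i : ℕ) : FreeMonoid (TMGen n) :=
  if h : 1 ≤ i ∧ i ≤ n - 1 then FreeMonoid.of (TMGen.sig i h) else 1

/-- The word σ_i⁻¹ in the free monoid on the generators. -/
def wSI (n i : ℕ) : FreeMonoid (TMGen n) :=
  if h : 1 ≤ i ∧ i ≤ n - 1 then FreeMonoid.of (TMGen.sigInv i h) else 1

/-- The word η_i in the free monoid on the generators. -/
def wE (n i : ℕ) : FreeMonoid (TMGen n) :=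
  if h : 1 ≤ i ∧ i ≤ n - 1 then FreeMonoid.of (TMGen.eta i h) else 1

/-- The defining relations of the tied braid monoid `TM n`. -/
inductive TMRel (n : ℕ) : FreeMonoid (TMGen n) → FreeMonoid (TMGen n) → Prop
  | inv_right (i : ℕ) (h : 1 ≤ i ∧ i ≤ n - 1) :
      TMRel n (wS n i * wSI n i) 1
  | inv_left (i : ℕ) (h : 1 ≤ i ∧ i ≤ n - 1) :
      TMRel n (wSI n i * wS n i) 1
  | braid (i : ℕ) (h : 1 ≤ i ∧ i + 1 ≤ n - 1) :
      TMRel n (wS n i * wS n (i+1) * wS n i) (wS n (i+1) * wS n i * wS n (i+1))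
  | sig_comm (i j : ℕ) (hi : 1 ≤ i ∧ i ≤ n - 1) (hj : 1 ≤ j ∧ j ≤ n - 1)
      (hij : i + 2 ≤ j ∨ j + 2 ≤ i) :
      TMRel n (wS n i * wS n j) (wS n j * wS n i)
  | eta_comm (i j : ℕ) (hi : 1 ≤ i ∧ i ≤ n - 1) (hj : 1 ≤ j ∧ j ≤ n - 1) :
      TMRel n (wE n i * wE n j) (wE n j * wE n i)
  | eta_sig (i : ℕ) (h : 1 ≤ i ∧ i ≤ n - 1) :
      TMRel n (wE n i * wS n i) (wS n i * wE n i)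
  | eta_sig_far (i j : ℕ) (hi : 1 ≤ i ∧ i ≤ n - 1) (hj : 1 ≤ j ∧ j ≤ n - 1)
      (hij : i + 2 ≤ j ∨ j + 2 ≤ i) :
      TMRel n (wE n i * wS n j) (wS n j * wE n i)
  | eta_slide_pos (i j : ℕ) (hi : 1 ≤ i ∧ i ≤ n - 1) (hj : 1 ≤ j ∧ j ≤ n - 1)
      (hij : j = i + 1 ∨ i = j + 1) :
      TMRel n (wE n i * wS n j * wS n i) (wS n j * wS n i * wE n j)
  | eta_slide_neg (i j : ℕ) (hi : 1 ≤ i ∧ i ≤ n - 1) (hj : 1 ≤ j ∧ j ≤ n - 1)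
      (hij : j = i + 1 ∨ i = j + 1) :
      TMRel n (wE n i * wS n j * wSI n i) (wS n j * wSI n i * wE n j)
  | eta_eta_sig₁ (i j : ℕ) (hi : 1 ≤ i ∧ i ≤ n - 1) (hj : 1 ≤ j ∧ j ≤ n - 1)
      (hij : j = i + 1 ∨ i = j + 1) :
      TMRel n (wE n i * wE n j * wS n i) (wE n j * wS n i * wE n j)
  | eta_eta_sig₂ (i j : ℕ) (hi : 1 ≤ i ∧ i ≤ n - 1) (hj : 1 ≤ j ∧ j ≤ n - 1)
      (hij : j = i + 1 ∨ i = j + 1) :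
      TMRel n (wE n j * wS n i * wE n j) (wS n i * wE n i * wE n j)
  | eta_idem (i : ℕ) (h : 1 ≤ i ∧ i ≤ n - 1) :
      TMRel n (wE n i * wE n i) (wE n i)

/-- The tied braid monoid `TM n`: the quotient of the free monoid on the
generators by the congruence generated by the defining relations. -/
def TM (n : ℕ) := (conGen (TMRel n)).Quotient

instance (n : ℕ) : Monoid (TM n) :=
  inferInstanceAs (Monoid ((conGen (TMRel n)).Quotient))

/-- The generator σ_i of `TM n` (defined for 1 ≤ i ≤ n−1; junk value 1 otherwise). -/
def TM.s (n i : ℕ) : TM n := (conGen (TMRel n)).mk' (wS n i)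

/-- The generator σ_i⁻¹ of `TM n` (defined for 1 ≤ i ≤ n−1; junk value 1 otherwise). -/
def TM.sInv (n i : ℕ) : TM n := (conGen (TMRel n)).mk' (wSI n i)

/-- The generator η_i of `TM n` (defined for 1 ≤ i ≤ n−1; junk value 1 otherwise). -/
def TM.e (n i : ℕ) : TM n := (conGen (TMRel n)).mk' (wE n i)

/-- The generalized tie η_{i,j} = σ_i σ_{i+1} ⋯ σ_{j−2} η_{j−1} σ_{j−2}⁻¹ ⋯ σ_{i+1}⁻¹ σ_i⁻¹,
for 1 ≤ i < j ≤ n (in particular η_{i,i+1} = η_i). -/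
def TM.genTie (n i j : ℕ) : TM n :=
  (((List.range' i (j - 1 - i)).map (TM.s n)).prod) * TM.e n (j - 1) *
    (((List.range' i (j - 1 - i)).reverse.map (TM.sInv n)).prod)

/-! Conjugation by σ_i turns η_{i+1,j} into η_{i,j}, so the relation says that σ_i² centralises
η_{i+1,j}. This is proved by induction on j − i. For j = i + 2 the two slide relations give
η_i = (σ_{i+1}σ_i) η_{i+1} (σ_{i+1}σ_i)⁻¹ and η_{i+1} = (σ_iσ_{i+1}⁻¹) η_i (σ_iσ_{i+1}⁻¹)⁻¹,
and the two conjugators multiply to σ_i². For larger j, η_{i+1,j} = σ_{i+1} η_{i+2,j} σ_{i+1}⁻¹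
and the braid relation gives σ_{i+1}⁻¹ σ_i² σ_{i+1} = σ_i σ_{i+1}² σ_i⁻¹, which centralises
η_{i+2,j}: σ_i is far from every letter of it, and σ_{i+1}² by induction. -/

open ConjAct

theorem ConjAct.units_smul_eq_iff {M : Type*} [Monoid M] (u : Mˣ) (x y : M) :
    toConjAct u • x = y ↔ ↑u * x = y * ↑u := by
  rw [units_smul_def, ofConjAct_toConjAct, Units.mul_inv_eq_iff_eq_mul]

theorem conj_sq_eq_of_braid {G : Type*} [Group G] {a b : G} (h : a * b * a = b * a * b) :
    b⁻¹ * a ^ 2 * b = a * b ^ 2 * a⁻¹ := by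
  have hconj : b⁻¹ * a * b = a * b * a⁻¹ :=
    calc b⁻¹ * a * b = b⁻¹ * (a * b * a) * a⁻¹ := by group
      _ = a * b * a⁻¹ := by rw [h]; group
  calc b⁻¹ * a ^ 2 * b = (b⁻¹ * a * b) * (b⁻¹ * a * b) := by simp [sq, mul_assoc]
    _ = (a * b * a⁻¹) * (a * b * a⁻¹) := by rw [hconj]
    _ = a * b ^ 2 * a⁻¹ := by simp [sq, mul_assoc]

namespace TM

variable {n : ℕ}

theorem mk'_eq_of_rel {x y : FreeMonoid (TMGen n)} (h : TMRel n x y) :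
    (conGen (TMRel n)).mk' x = (conGen (TMRel n)).mk' y :=
  (Con.eq _).mpr (ConGen.Rel.of x y h)

theorem s_of_not_mem {i : ℕ} (h : ¬(1 ≤ i ∧ i ≤ n - 1)) : s n i = 1 := by
  simp only [s, wS, dif_neg h, map_one]
  rfl

theorem sInv_of_not_mem {i : ℕ} (h : ¬(1 ≤ i ∧ i ≤ n - 1)) : sInv n i = 1 := by
  simp only [sInv, wSI, dif_neg h, map_one]
  rfl

theorem e_of_not_mem {i : ℕ} (h : ¬(1 ≤ i ∧ i ≤ n - 1)) : e n i = 1 := by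
  simp only [e, wE, dif_neg h, map_one]
  rfl

theorem s_mul_sInv (i : ℕ) : s n i * sInv n i = 1 := by
  by_cases h : 1 ≤ i ∧ i ≤ n - 1
  · exact mk'_eq_of_rel (TMRel.inv_right i h)
  · rw [s_of_not_mem h, sInv_of_not_mem h, mul_one]

theorem sInv_mul_s (i : ℕ) : sInv n i * s n i = 1 := by
  by_cases h : 1 ≤ i ∧ i ≤ n - 1
  · exact mk'_eq_of_rel (TMRel.inv_left i h)
  · rw [s_of_not_mem h, sInv_of_not_mem h, mul_one]

theorem braid {i : ℕ} (h : 1 ≤ i ∧ i + 1 ≤ n - 1) :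
    s n i * s n (i + 1) * s n i = s n (i + 1) * s n i * s n (i + 1) :=
  mk'_eq_of_rel (TMRel.braid i h)

theorem commute_s_s_of_far {i j : ℕ} (hij : i + 2 ≤ j ∨ j + 2 ≤ i) :
    Commute (s n i) (s n j) := by
  by_cases hi : 1 ≤ i ∧ i ≤ n - 1
  · by_cases hj : 1 ≤ j ∧ j ≤ n - 1
    · exact mk'_eq_of_rel (TMRel.sig_comm i j hi hj hij)
    · rw [s_of_not_mem hj]; exact Commute.one_right _
  · rw [s_of_not_mem hi]; exact Commute.one_left _

theorem commute_e_s_of_far {i j : ℕ} (hij : i + 2 ≤ j ∨ j + 2 ≤ i) :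
    Commute (e n i) (s n j) := by
  by_cases hi : 1 ≤ i ∧ i ≤ n - 1
  · by_cases hj : 1 ≤ j ∧ j ≤ n - 1
    · exact mk'_eq_of_rel (TMRel.eta_sig_far i j hi hj hij)
    · rw [s_of_not_mem hj]; exact Commute.one_right _
  · rw [e_of_not_mem hi]; exact Commute.one_left _

theorem e_mul_s_mul_s_of_adj {i j : ℕ} (hi : 1 ≤ i ∧ i ≤ n - 1) (hj : 1 ≤ j ∧ j ≤ n - 1)
    (hij : j = i + 1 ∨ i = j + 1) :
    e n i * s n j * s n i = s n j * s n i * e n j :=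
  mk'_eq_of_rel (TMRel.eta_slide_pos i j hi hj hij)

theorem e_mul_s_mul_sInv_of_adj {i j : ℕ} (hi : 1 ≤ i ∧ i ≤ n - 1) (hj : 1 ≤ j ∧ j ≤ n - 1)
    (hij : j = i + 1 ∨ i = j + 1) :
    e n i * s n j * sInv n i = s n j * sInv n i * e n j :=
  mk'_eq_of_rel (TMRel.eta_slide_neg i j hi hj hij)

def sUnit (n i : ℕ) : (TM n)ˣ := ⟨s n i, sInv n i, s_mul_sInv i, sInv_mul_s i⟩

@[simp] theorem val_sUnit (i : ℕ) : (sUnit n i : TM n) = s n i := rfl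

@[simp] theorem val_sUnit_inv (i : ℕ) : ((sUnit n i)⁻¹ : (TM n)ˣ) = sInv n i := rfl

theorem sUnit_braid {i : ℕ} (h : 1 ≤ i ∧ i + 1 ≤ n - 1) :
    sUnit n i * sUnit n (i + 1) * sUnit n i = sUnit n (i + 1) * sUnit n i * sUnit n (i + 1) :=
  Units.ext (braid h)

theorem genTie_succ_self (i : ℕ) : genTie n i (i + 1) = e n i := by
  simp [genTie]

theorem genTie_eq_smul {i j : ℕ} (hij : i + 2 ≤ j) :
    genTie n i j = toConjAct (sUnit n i) • genTie n (i + 1) j := by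
  rw [units_smul_def, ofConjAct_toConjAct, val_sUnit, val_sUnit_inv, genTie, genTie,
    show j - 1 - i = (j - 1 - (i + 1)) + 1 by omega, List.range'_succ]
  simp only [List.map_cons, List.prod_cons, List.reverse_cons, List.map_append,
    List.prod_append, List.map_nil, List.prod_nil, mul_one, mul_assoc]

theorem commute_s_genTie {k a b : ℕ} (hka : k + 2 ≤ a) (hab : a < b) :
    Commute (s n k) (genTie n a b) := by
  have hs : ∀ m ∈ List.range' a (b - 1 - a), Commute (s n k) (s n m) := fun m hm =>
    commute_s_s_of_far (Or.inl (by rw [List.mem_range'_1] at hm; omega))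
  refine Commute.mul_right (Commute.mul_right ?_ ?_) ?_
  · refine Commute.list_prod_right _ _ fun x hx => ?_
    obtain ⟨m, hm, rfl⟩ := List.mem_map.mp hx
    exact hs m hm
  · exact (commute_e_s_of_far (Or.inr (by omega))).symm
  · refine Commute.list_prod_right _ _ fun x hx => ?_
    obtain ⟨m, hm, rfl⟩ := List.mem_map.mp hx
    exact (hs m (List.mem_reverse.mp hm)).units_inv_right (u := sUnit n m)

theorem sUnit_smul_genTie {k a b : ℕ} (hka : k + 2 ≤ a) (hab : a < b) :
    toConjAct (sUnit n k) • genTie n a b = genTie n a b :=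
  (ConjAct.units_smul_eq_iff _ _ _).mpr (commute_s_genTie hka hab).eq

theorem sUnit_sq_smul_e_succ {i : ℕ} (h : 1 ≤ i ∧ i + 1 ≤ n - 1) :
    toConjAct (sUnit n i ^ 2) • e n (i + 1) = e n (i + 1) := by
  have hi : 1 ≤ i ∧ i ≤ n - 1 := ⟨h.1, by omega⟩
  have hi' : 1 ≤ i + 1 ∧ i + 1 ≤ n - 1 := ⟨by omega, h.2⟩
  have hdown : toConjAct (sUnit n (i + 1) * sUnit n i) • e n (i + 1) = e n i := by
    rw [ConjAct.units_smul_eq_iff, Units.val_mul, val_sUnit, val_sUnit]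
    simpa only [mul_assoc] using (e_mul_s_mul_s_of_adj hi hi' (Or.inl rfl)).symm
  have hup : toConjAct (sUnit n i * (sUnit n (i + 1))⁻¹) • e n i = e n (i + 1) := by
    rw [ConjAct.units_smul_eq_iff, Units.val_mul, val_sUnit, val_sUnit_inv]
    simpa only [mul_assoc] using (e_mul_s_mul_sInv_of_adj hi' hi (Or.inr rfl)).symm
  rw [show sUnit n i ^ 2 = (sUnit n i * (sUnit n (i + 1))⁻¹) * (sUnit n (i + 1) * sUnit n i) by
    simp [sq, mul_assoc], map_mul, mul_smul, hdown, hup]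

theorem sUnit_sq_smul_genTie (d : ℕ) {i : ℕ} (hi : 1 ≤ i) (hn : i + 2 + d ≤ n) :
    toConjAct (sUnit n i ^ 2) • genTie n (i + 1) (i + 2 + d) = genTie n (i + 1) (i + 2 + d) := by
  induction d generalizing i with
  | zero => rw [add_zero, genTie_succ_self]; exact sUnit_sq_smul_e_succ ⟨hi, by omega⟩
  | succ d ih =>
    set a := sUnit n i
    set b := sUnit n (i + 1)
    set Y := genTie n (i + 1 + 1) (i + 2 + (d + 1))
    have hbY : toConjAct (b ^ 2) • Y = Y := by
      simpa only [Y, show i + 1 + 2 + d = i + 2 + (d + 1) by omega] using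
        ih (i := i + 1) (by omega) (by omega)
    have haY : toConjAct a • Y = Y := sUnit_smul_genTie (by omega) (by omega)
    have hfix : toConjAct (a * b ^ 2 * a⁻¹) • Y = Y := by
      rw [map_mul, map_mul, mul_smul, mul_smul, map_inv, inv_smul_eq_iff.mpr haY.symm, hbY, haY]
    rw [genTie_eq_smul (by omega)]
    calc toConjAct (a ^ 2) • toConjAct b • Y
        = toConjAct b • toConjAct (b⁻¹ * a ^ 2 * b) • Y := by
          simp only [← mul_smul, ← map_mul, mul_assoc, mul_inv_cancel_left]
      _ = toConjAct b • Y := by rw [conj_sq_eq_of_braid (sUnit_braid ⟨hi, by omega⟩), hfix]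

end TM

theorem tm_genTie_rel_i_general (n : ℕ) (i j : ℕ)
    (hi : 1 ≤ i) (hij : i + 1 < j) (hj : j ≤ n) :
    TM.s n i * TM.genTie n i j = TM.genTie n (i + 1) j * TM.s n i := by
  obtain ⟨d, rfl⟩ : ∃ d, j = i + 2 + d := ⟨j - (i + 2), by omega⟩
  have hfix := TM.sUnit_sq_smul_genTie d hi hj
  rwa [sq, map_mul, mul_smul, ← TM.genTie_eq_smul (by omega), ConjAct.units_smul_eq_iff] at hfix

/-- **Relation (i) of the generalized-tie relations**: for every n ≥ 2 and indices
1 ≤ i with i+1 < j ≤ n, σ_i η_{i,j} = η_{i+1,j} σ_i holds in `TM n`. -/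
theorem tm_genTie_rel_i (n : ℕ) (hn : 2 ≤ n) (i j : ℕ)
    (hi : 1 ≤ i) (hij : i + 1 < j) (hj : j ≤ n) :
    TM.s n i * TM.genTie n i j = TM.genTie n (i + 1) j * TM.s n i :=
  tm_genTie_rel_i_general n i j hi hij hj
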